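/- If 0 ≤ |θ| ≤ 4P_ratio/(N_s² + 1) with P_ratio = (P₁+P₂)/P_unit, then f(K) = K(P₁+P₂) + ((N_s²/K - K)/4)|θ|P_unit is minimized over K ∈ [1, N_s] at K = 1. -/

import Mathlib

open Real

theorem stmt_7 (P1 P2 Punit : ℝ) (hP12 : 0 < P1 + P2) (hPu : 0 < Punit)
    (Ns : ℝ) (hNs : 1 ≤ Ns) (θ : ℝ)
    (Pratio : ℝ) (hPr : Pratio = (P1 + P2) / Punit)
    (hθ : |θ| ≤ 4 * Pratio / (Ns ^ 2 + 1))
    (f : ℝ → ℝ)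
    (hf : ∀ K : ℝ, f K = K * (P1 + P2) + ((Ns ^ 2 / K - K) / 4) * |θ| * Punit) :
    ∀ K ∈ Set.Icc (1 : ℝ) Ns, f 1 ≤ f K := by
  rintro K ⟨hK1, hKN⟩
  have hK0 : 0 < K := lt_of_lt_of_le one_pos hK1
  have ht : 0 ≤ |θ| := abs_nonneg θ
  have hden : (0:ℝ) < Ns ^ 2 + 1 := by positivity
  have h1 : |θ| * (Ns ^ 2 + 1) * Punit ≤ 4 * (P1 + P2) := by
    rw [hPr] at hθ
    have h2 : |θ| * (Ns ^ 2 + 1) ≤ 4 * ((P1 + P2) / Punit) := by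
      rw [div_eq_mul_inv] at hθ
      calc |θ| * (Ns ^ 2 + 1) ≤ 4 * ((P1 + P2) / Punit) * (Ns ^ 2 + 1)⁻¹ * (Ns ^ 2 + 1) := by
            apply mul_le_mul_of_nonneg_right hθ (le_of_lt hden)
        _ = 4 * ((P1 + P2) / Punit) := by field_simp
    calc |θ| * (Ns ^ 2 + 1) * Punit ≤ 4 * ((P1 + P2) / Punit) * Punit :=
          mul_le_mul_of_nonneg_right h2 (le_of_lt hPu)
      _ = 4 * (P1 + P2) := by field_simp
  rw [hf 1, hf K, div_one]
  have key : 0 ≤ (K - 1) * (4 * K * (P1 + P2) - (Ns ^ 2 + K) * (|θ| * Punit)) := by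
    apply mul_nonneg (sub_nonneg.mpr hK1)
    nlinarith [mul_le_mul_of_nonneg_left h1 hK0.le,
      mul_nonneg (mul_nonneg (sub_nonneg.mpr hK1) (sq_nonneg Ns)) (mul_nonneg ht hPu.le)]
  have h2 : K * ((K * (P1 + P2) + (Ns ^ 2 / K - K) / 4 * |θ| * Punit)
      - (1 * (P1 + P2) + (Ns ^ 2 - 1) / 4 * |θ| * Punit))
      = (K - 1) * (4 * K * (P1 + P2) - (Ns ^ 2 + K) * (|θ| * Punit)) / 4 := by
    field_simp
    ring
  have h3 : 0 ≤ K * ((K * (P1 + P2) + (Ns ^ 2 / K - K) / 4 * |θ| * Punit)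
      - (1 * (P1 + P2) + (Ns ^ 2 - 1) / 4 * |θ| * Punit)) := by
    rw [h2]; positivity
  have h4 := le_of_mul_le_mul_left (by linarith : K * 0 ≤ K * ((K * (P1 + P2) + (Ns ^ 2 / K - K) / 4 * |θ| * Punit)
      - (1 * (P1 + P2) + (Ns ^ 2 - 1) / 4 * |θ| * Punit))) hK0
  linarith
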